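/- In the polynomial ring ℤ[X₁,X₂,X₃,Y₁,Y₂,Y₃], set q₁ := X₁²+X₂²+X₃²+X₁X₂+X₁X₃+X₂X₃ and q₂ := Y₁²+Y₂²+Y₃²+Y₁Y₂+Y₁Y₃+Y₂Y₃, and let f₁ := X₁−X₂, f₂ := X₁−X₃, f₃ := Y₁−Y₂, f₄ := Y₁−Y₃, f₅ := 2X₁+2Y₁, f₆ := 2X₁−2Y₁. Then the set of pairs of integers (α, β) such that α·q₁ + β·q₂ lies in the ℤ-span of the products f_i·f_j (1 ≤ i ≤ j ≤ 6) is exactly the subgroup of ℤ² generated by (4,4) and (2,6). (This is the computation in Lemma 7.1 of the paper showing that S²(T_H^*)^W is generated by 4q₁+4q₂ and 2q₁+6q₂.) -/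

import Mathlib

/-!
At a point `(a,a,a,b,b,b)` the forms `f₁,…,f₄` vanish while `f₅ = 2(a+b)`, `f₆ = 2(a-b)`,
`q₁ = 6a²` and `q₂ = 6b²`. If every `f_i` is divisible by `d` there, every element of the span
of the `f_i f_j` is divisible by `d²`. The points `(1,1,1,0,0,0)` with `d = 2` and
`(1,1,1,-1,-1,-1)` with `d = 4` give `4 ∣ 6α` and `16 ∣ 6(α + β)`, which cut out the lattice
spanned by `(4,4)` and `(2,6)`. Conversely `4q₁ + 4q₂` and `2q₁ + 6q₂` are explicit integral
quadratic expressions in the `f_i`.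
-/

open MvPolynomial

/-- The variables `X₁,X₂,X₃,Y₁,Y₂,Y₃` of `ℤ[X₁,X₂,X₃,Y₁,Y₂,Y₃]` are modeled as
`X 0, X 1, X 2, X 3, X 4, X 5` in `MvPolynomial (Fin 6) ℤ`. `q₁` is the form
`X₁²+X₂²+X₃²+X₁X₂+X₁X₃+X₂X₃`. -/
noncomputable def q1 : MvPolynomial (Fin 6) ℤ :=
  X 0 ^ 2 + X 1 ^ 2 + X 2 ^ 2 + X 0 * X 1 + X 0 * X 2 + X 1 * X 2

/-- `q₂ = Y₁²+Y₂²+Y₃²+Y₁Y₂+Y₁Y₃+Y₂Y₃`. -/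
noncomputable def q2 : MvPolynomial (Fin 6) ℤ :=
  X 3 ^ 2 + X 4 ^ 2 + X 5 ^ 2 + X 3 * X 4 + X 3 * X 5 + X 4 * X 5

/-- The six basis linear forms `f₁,…,f₆` of Lemma 7.1:
`X₁−X₂, X₁−X₃, Y₁−Y₂, Y₁−Y₃, 2X₁+2Y₁, 2X₁−2Y₁`. -/
noncomputable def fGen : Fin 6 → MvPolynomial (Fin 6) ℤ :=
  ![X 0 - X 1, X 0 - X 2, X 3 - X 4, X 3 - X 5,
    2 * X 0 + 2 * X 3, 2 * X 0 - 2 * X 3]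

open Submodule

section ProductSpan

variable {ι A : Type*} [CommRing A]

def productSpan [LE ι] (f : ι → A) : Submodule ℤ A :=
  span ℤ {p | ∃ i j, i ≤ j ∧ p = f i * f j}

theorem sq_dvd_map_of_mem_productSpan [LE ι] {B : Type*} [CommRing B] {f : ι → A}
    (φ : A →+* B) {d : B} (hd : ∀ i, d ∣ φ (f i)) {p : A} (hp : p ∈ productSpan f) :
    d ^ 2 ∣ φ p := by
  induction hp using span_induction with
  | mem x hx =>
    obtain ⟨i, j, -, rfl⟩ := hx
    rw [map_mul, sq]
    exact mul_dvd_mul (hd i) (hd j)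
  | zero => simp
  | add x y _ _ hx hy => rw [map_add]; exact dvd_add hx hy
  | smul n x _ hx => rw [map_zsmul, zsmul_eq_mul]; exact hx.mul_left _

theorem mul_mem_productSpan [LinearOrder ι] {f : ι → A} {a b : A}
    (ha : a ∈ span ℤ (Set.range f)) (hb : b ∈ span ℤ (Set.range f)) :
    a * b ∈ productSpan f := by
  have hab := mul_mem_mul ha hb
  rw [span_mul_span] at hab
  refine span_mono ?_ hab
  rintro _ ⟨_, ⟨i, rfl⟩, _, ⟨j, rfl⟩, rfl⟩
  rcases le_total i j with hij | hji
  · exact ⟨i, j, hij, rfl⟩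
  · exact ⟨j, i, hji, mul_comm _ _⟩

end ProductSpan

theorem mem_span_four_four_two_six_iff (α β : ℤ) :
    (α, β) ∈ span ℤ {((4, 4) : ℤ × ℤ), ((2, 6) : ℤ × ℤ)} ↔ 2 ∣ α ∧ 8 ∣ α + β := by
  simp only [mem_span_pair, Prod.smul_mk, smul_eq_mul, Prod.mk_add_mk, Prod.mk.injEq]
  constructor
  · rintro ⟨a, b, rfl, rfl⟩
    constructor <;> omega
  · rintro ⟨⟨u, rfl⟩, ⟨w, hw⟩⟩
    exact ⟨u - w, 2 * w - u, by ring, by omega⟩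

section DiagonalPoints

variable (a b : ℤ)

def diagPoint : Fin 6 → ℤ := ![a, a, a, b, b, b]

theorem eval_diagPoint_q1 : eval (diagPoint a b) q1 = 6 * a ^ 2 := by
  simp [diagPoint, q1]; ring

theorem eval_diagPoint_q2 : eval (diagPoint a b) q2 = 6 * b ^ 2 := by
  simp [diagPoint, q2]; ring

theorem dvd_eval_diagPoint_fGen {d : ℤ} (hsum : d ∣ 2 * (a + b)) (hdiff : d ∣ 2 * (a - b))
    (i : Fin 6) : d ∣ eval (diagPoint a b) (fGen i) := by
  fin_cases i <;> simp [diagPoint, fGen, ← mul_add, ← mul_sub, hsum, hdiff]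

end DiagonalPoints

theorem sq_dvd_of_mem_productSpan_fGen {α β : ℤ}
    (h : C α * q1 + C β * q2 ∈ productSpan fGen) {a b d : ℤ}
    (hsum : d ∣ 2 * (a + b)) (hdiff : d ∣ 2 * (a - b)) :
    d ^ 2 ∣ 6 * (α * a ^ 2 + β * b ^ 2) := by
  have hdvd := sq_dvd_map_of_mem_productSpan (eval (diagPoint a b))
    (dvd_eval_diagPoint_fGen a b hsum hdiff) h
  rw [map_add, map_mul, map_mul, eval_C, eval_C, eval_diagPoint_q1, eval_diagPoint_q2] at hdvd
  rwa [show α * (6 * a ^ 2) + β * (6 * b ^ 2) = 6 * (α * a ^ 2 + β * b ^ 2) by ring] at hdvd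

theorem fGen_mem_span (i : Fin 6) : fGen i ∈ span ℤ (Set.range fGen) :=
  subset_span (Set.mem_range_self i)

/- `fGen i` is `f_{i+1}`. The identities come from `q₁ = 6X₁² - 4X₁(f₁ + f₂) + f₁² + f₁f₂ + f₂²`
(and its analogue for `q₂`), together with `f₅ + f₆ = 4X₁`, `f₅ - f₆ = 4Y₁`. -/
theorem four_q1_add_four_q2_mem : C 4 * q1 + C 4 * q2 ∈ productSpan fGen := by
  have key : C 4 * q1 + C 4 * q2 = 3 • (fGen 4 * fGen 4) + 3 • (fGen 5 * fGen 5)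
      - 4 • ((fGen 4 + fGen 5) * (fGen 0 + fGen 1)) - 4 • ((fGen 4 - fGen 5) * (fGen 2 + fGen 3))
      + 4 • (fGen 0 * (fGen 0 + fGen 1) + fGen 1 * fGen 1
        + fGen 2 * (fGen 2 + fGen 3) + fGen 3 * fGen 3) := by
    simp only [q1, q2, fGen, Matrix.cons_val, map_ofNat]
    ring
  rw [key]
  apply_rules (maxDepth := 100) (transparency := .reducible)
    [add_mem, sub_mem, nsmul_mem, mul_mem_productSpan, fGen_mem_span]

theorem two_q1_add_six_q2_mem : C 2 * q1 + C 6 * q2 ∈ productSpan fGen := by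
  have key : C 2 * q1 + C 6 * q2 = 3 • (fGen 4 * fGen 4) - 3 • (fGen 4 * fGen 5)
      + 3 • (fGen 5 * fGen 5) - 2 • ((fGen 4 + fGen 5) * (fGen 0 + fGen 1))
      - 6 • ((fGen 4 - fGen 5) * (fGen 2 + fGen 3))
      + 2 • (fGen 0 * (fGen 0 + fGen 1) + fGen 1 * fGen 1)
      + 6 • (fGen 2 * (fGen 2 + fGen 3) + fGen 3 * fGen 3) := by
    simp only [q1, q2, fGen, Matrix.cons_val, map_ofNat]
    ring
  rw [key]
  apply_rules (maxDepth := 100) (transparency := .reducible)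
    [add_mem, sub_mem, nsmul_mem, mul_mem_productSpan, fGen_mem_span]

/-- Lemma 7.1: `α·q₁ + β·q₂` lies in the ℤ-span of the products `f_i f_j` iff `(α,β)`
lies in the subgroup of `ℤ²` generated by `(4,4)` and `(2,6)`. -/
theorem stmt_15 (α β : ℤ) :
    (C α * q1 + C β * q2 ∈
        Submodule.span ℤ {p : MvPolynomial (Fin 6) ℤ |
          ∃ i j : Fin 6, i ≤ j ∧ p = fGen i * fGen j}) ↔
      (α, β) ∈ Submodule.span ℤ {((4, 4) : ℤ × ℤ), ((2, 6) : ℤ × ℤ)} := by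
  change C α * q1 + C β * q2 ∈ productSpan fGen ↔ _
  constructor
  · intro h
    have h₁ : 2 ^ 2 ∣ 6 * (α * 1 ^ 2 + β * 0 ^ 2) :=
      sq_dvd_of_mem_productSpan_fGen h (by norm_num) (by norm_num)
    have h₂ : 4 ^ 2 ∣ 6 * (α * 1 ^ 2 + β * (-1) ^ 2) :=
      sq_dvd_of_mem_productSpan_fGen h (by norm_num) (by norm_num)
    norm_num at h₁ h₂
    rw [mem_span_four_four_two_six_iff]
    omega
  · intro h
    obtain ⟨a, b, hab⟩ := mem_span_pair.mp h
    obtain ⟨rfl, rfl⟩ : a * 4 + b * 2 = α ∧ a * 4 + b * 6 = β := by simpa using hab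
    have hcomb : C (a * 4 + b * 2) * q1 + C (a * 4 + b * 6) * q2 =
        a • (C 4 * q1 + C 4 * q2) + b • (C 2 * q1 + C 6 * q2) := by
      simp only [smul_eq_C_mul, map_add, map_mul, map_ofNat]
      ring
    rw [hcomb]
    exact add_mem (smul_mem _ a four_q1_add_four_q2_mem) (smul_mem _ b two_q1_add_six_q2_mem)
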